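/- arXiv:math/0403411 — 2 statements merged into one kernel-verified Lean document; each statement's English description precedes it below -/
import Mathlib

section
/- On M = 𝕋^d × ℝ^d with ω = Σ dθ_j ∧ da_j, if a smooth symplectic vector field Ỹ on M projects under π(θ,a)=a to a well-defined vector field Y on ℝ^d (i.e. Ỹ is a lift of Y), then Ỹ commutes with the fiberwise torus translations: (τ_t)_*Ỹ = Ỹ for all t ∈ 𝕋^d, where τ_t(θ,a) = (θ+t,a). Equivalently, [Ỹ, ∂/∂θ_j] = 0 for each j. -/
open MeasureTheory

/-- The standard symplectic form `ω = Σ dθ_j ∧ da_j` on `M = 𝕋^d × ℝ^d`. -/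
def stdSymp (d : ℕ) (v w : (Fin d → ℝ) × (Fin d → ℝ)) : ℝ :=
  ∑ j, (v.1 j * w.2 j - w.1 j * v.2 j)

/-- The symplectic pairing with a fixed `w`, as a continuous linear map. -/
noncomputable def sympCLM (d : ℕ) (w : (Fin d → ℝ) × (Fin d → ℝ)) :
    ((Fin d → ℝ) × (Fin d → ℝ)) →L[ℝ] ℝ :=
  ∑ j, (w.2 j • ((ContinuousLinearMap.proj j).comp
          (ContinuousLinearMap.fst ℝ (Fin d → ℝ) (Fin d → ℝ)))
      - w.1 j • ((ContinuousLinearMap.proj j).comp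
          (ContinuousLinearMap.snd ℝ (Fin d → ℝ) (Fin d → ℝ))))

lemma sympCLM_apply (d : ℕ) (w u : (Fin d → ℝ) × (Fin d → ℝ)) :
    sympCLM d w u = stdSymp d u w := by
  unfold sympCLM stdSymp
  simp only [ContinuousLinearMap.sum_apply, ContinuousLinearMap.sub_apply,
    ContinuousLinearMap.smul_apply, ContinuousLinearMap.comp_apply,
    ContinuousLinearMap.coe_fst', ContinuousLinearMap.coe_snd',
    ContinuousLinearMap.proj_apply, smul_eq_mul]
  exact Finset.sum_congr rfl fun j _ => by ring

lemma fderiv_stdSymp (d : ℕ)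
    (Y : ((Fin d → ℝ) × (Fin d → ℝ)) → ((Fin d → ℝ) × (Fin d → ℝ)))
    (hY : Differentiable ℝ Y) (p v w : (Fin d → ℝ) × (Fin d → ℝ)) :
    fderiv ℝ (fun q => stdSymp d (Y q) w) p v = stdSymp d (fderiv ℝ Y p v) w := by
  have h1 : (fun q => stdSymp d (Y q) w) = fun q => sympCLM d w (Y q) := by
    funext q; rw [sympCLM_apply]
  have h2 : HasFDerivAt (fun q => sympCLM d w (Y q))
      ((sympCLM d w).comp (fderiv ℝ Y p)) p :=
    ((sympCLM d w).hasFDerivAt).comp p (hY p).hasFDerivAt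
  rw [h1, h2.fderiv, ContinuousLinearMap.comp_apply, sympCLM_apply]

/-- On `M = 𝕋^d × ℝ^d` with `ω = Σ dθ_j ∧ da_j` (torus modelled by
ℤ^d-periodicity in the angles), if a smooth symplectic vector field `Ỹ` projects under
`π(θ,a) = a` to a well-defined vector field on `ℝ^d` (its `a`-component is independent of `θ`),
then `Ỹ` is invariant under all fiberwise torus translations `τ_t(θ,a) = (θ+t, a)`, i.e. its
components depend on `a` only (equivalently `[Ỹ, ∂/∂θ_j] = 0` for all `j`). -/
theorem symplectic_lift_is_translation_invariant
    (d : ℕ)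
    (Y : ((Fin d → ℝ) × (Fin d → ℝ)) → ((Fin d → ℝ) × (Fin d → ℝ)))
    (hsmooth : ContDiff ℝ (⊤ : ℕ∞) Y)
    (hper : ∀ (θ a : Fin d → ℝ) (n : Fin d → ℤ), Y (θ + (fun i => (n i : ℝ)), a) = Y (θ, a))
    (hclosed : ∀ (p : (Fin d → ℝ) × (Fin d → ℝ)) (v w : (Fin d → ℝ) × (Fin d → ℝ)),
      fderiv ℝ (fun q => stdSymp d (Y q) w) p v = fderiv ℝ (fun q => stdSymp d (Y q) v) p w)
    (hlift : ∀ θ θ' a : Fin d → ℝ, (Y (θ, a)).2 = (Y (θ', a)).2) :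
    ∀ t θ a : Fin d → ℝ, Y (θ + t, a) = Y (θ, a) := by
  classical
  intro t θ₀ a
  have hYdiff : Differentiable ℝ Y := hsmooth.differentiable (by simp)
  -- the projected vector field on the base
  set g : (Fin d → ℝ) → (Fin d → ℝ) := fun b => (Y (0, b)).2 with hgdef
  have hgdiff : Differentiable ℝ g :=
    differentiable_snd.comp (hYdiff.comp (Differentiable.prodMk (differentiable_const _) differentiable_id))
  -- the a-derivative of Y only sees the a-component of the direction
  have hB : ∀ (p w : (Fin d → ℝ) × (Fin d → ℝ)),
      (fderiv ℝ Y p w).2 = fderiv ℝ g p.2 w.2 := by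
    intro p w
    have h1 : HasFDerivAt (fun q => (Y q).2)
        ((ContinuousLinearMap.snd ℝ (Fin d → ℝ) (Fin d → ℝ)).comp (fderiv ℝ Y p)) p :=
      ((ContinuousLinearMap.snd ℝ (Fin d → ℝ) (Fin d → ℝ)).hasFDerivAt).comp p
        (hYdiff p).hasFDerivAt
    have heq : (fun q : (Fin d → ℝ) × (Fin d → ℝ) => (Y q).2)
        = (fun q : (Fin d → ℝ) × (Fin d → ℝ) => g q.2) := by
      funext q
      simpa [hgdef] using hlift q.1 0 q.2
    have h2 : HasFDerivAt (fun q : (Fin d → ℝ) × (Fin d → ℝ) => (Y q).2)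
        ((fderiv ℝ g p.2).comp (ContinuousLinearMap.snd ℝ (Fin d → ℝ) (Fin d → ℝ))) p := by
      rw [heq]
      exact (hgdiff p.2).hasFDerivAt.comp p
        ((ContinuousLinearMap.snd ℝ (Fin d → ℝ) (Fin d → ℝ)).hasFDerivAt)
    have h3 := h1.unique h2
    exact congrArg (fun L => L w) h3 |>.trans rfl |>.symm ▸
      (ContinuousLinearMap.ext_iff.mp h3 w)
  -- symmetry of the derivative pairing (closedness of ω(Y,·))
  have hsym : ∀ p v w, stdSymp d (fderiv ℝ Y p v) w = stdSymp d (fderiv ℝ Y p w) v := by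
    intro p v w
    rw [← fderiv_stdSymp d Y hYdiff p v w, ← fderiv_stdSymp d Y hYdiff p w v]
    exact hclosed p v w
  -- key: the θ-partials of the θ-component are independent of θ
  have key : ∀ (i j : Fin d) (θ : Fin d → ℝ),
      (fderiv ℝ Y (θ, a) (Pi.single i 1, 0)).1 j = -(fderiv ℝ g a (Pi.single j 1)) i := by
    intro i j θ
    have h := hsym (θ, a) (Pi.single i 1, 0) (0, Pi.single j 1)
    have hL : stdSymp d (fderiv ℝ Y (θ, a) (Pi.single i 1, 0)) (0, Pi.single j 1)
        = (fderiv ℝ Y (θ, a) (Pi.single i 1, 0)).1 j := by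
      simp [stdSymp, Pi.single_apply]
    have hR : stdSymp d (fderiv ℝ Y (θ, a) (0, Pi.single j 1)) (Pi.single i 1, 0)
        = -(fderiv ℝ Y (θ, a) (0, Pi.single j 1)).2 i := by
      simp [stdSymp, Pi.single_apply]
    rw [hL, hR] at h
    rw [h, hB (θ, a) (0, Pi.single j 1)]
  -- derivative of the θ-slice of each component
  have slice : ∀ (θ : Fin d → ℝ) (j : Fin d),
      HasFDerivAt (fun θ' => (Y (θ', a)).1 j)
        (((ContinuousLinearMap.proj j).comp
            (ContinuousLinearMap.fst ℝ (Fin d → ℝ) (Fin d → ℝ))).comp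
          ((fderiv ℝ Y (θ, a)).comp
            ((ContinuousLinearMap.id ℝ (Fin d → ℝ)).prod 0))) θ := by
    intro θ j
    have hι : HasFDerivAt (fun θ' : Fin d → ℝ => (θ', a))
        ((ContinuousLinearMap.id ℝ (Fin d → ℝ)).prod 0) θ :=
      HasFDerivAt.prodMk (hasFDerivAt_id θ) (hasFDerivAt_const a θ)
    exact (((ContinuousLinearMap.proj j).comp
        (ContinuousLinearMap.fst ℝ (Fin d → ℝ) (Fin d → ℝ))).hasFDerivAt).comp θ
      (((hYdiff (θ, a)).hasFDerivAt).comp θ hι)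
  have hconst : ∀ j : Fin d, (Y (θ₀ + t, a)).1 j = (Y (θ₀, a)).1 j := by
    intro j
    set f : (Fin d → ℝ) → ℝ := fun θ' => (Y (θ', a)).1 j with hfdef
    have hfd : Differentiable ℝ f := fun θ => (slice θ j).differentiableAt
    set c : Fin d → ℝ := fun i => -(fderiv ℝ g a (Pi.single j 1)) i with hcdef
    have hder : ∀ (θ : Fin d → ℝ) (i : Fin d), fderiv ℝ f θ (Pi.single i 1) = c i := by
      intro θ i
      rw [(slice θ j).fderiv]
      simpa using key i j θ
    have hc0 : ∀ i, c i = 0 := by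
      intro i
      set φ : ℝ → ℝ := fun s => f (θ₀ + s • (Pi.single i 1 : Fin d → ℝ)) with hφdef
      have hφ : ∀ s : ℝ, HasDerivAt φ (c i) s := by
        intro s
        have hline : HasDerivAt (fun s : ℝ => θ₀ + s • (Pi.single i 1 : Fin d → ℝ))
            (Pi.single i 1 : Fin d → ℝ) s := by
          simpa using ((hasDerivAt_id s).smul_const (Pi.single i 1 : Fin d → ℝ)).const_add θ₀
        have h := (hfd _).hasFDerivAt.comp_hasDerivAt s hline
        have hv : fderiv ℝ f (θ₀ + s • (Pi.single i 1 : Fin d → ℝ)) (Pi.single i 1) = c i := hder _ i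
        rw [hv] at h
        exact h
      have hψ : ∀ s : ℝ, HasDerivAt (fun s => φ s - s * c i) 0 s := by
        intro s
        have h := (hφ s).sub ((hasDerivAt_id s).mul_const (c i))
        rw [one_mul, sub_self] at h
        exact h
      have hψd : Differentiable ℝ (fun s => φ s - s * c i) := fun s => (hψ s).differentiableAt
      have hcst := is_const_of_deriv_eq_zero hψd (fun s => (hψ s).deriv) 1 0
      have hsingle : (fun k => (((Pi.single i 1 : Fin d → ℤ) k : ℤ) : ℝ)) = (Pi.single i 1 : Fin d → ℝ) := by
        funext k; by_cases h : k = i <;> simp [Pi.single_apply, h]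
      have hper1 : φ 1 = φ 0 := by
        have hn := hper θ₀ a (Pi.single i 1 : Fin d → ℤ)
        rw [hsingle] at hn
        simp only [hφdef, hfdef, one_smul, zero_smul, add_zero]
        rw [hn]
      simp only [one_mul, zero_mul, sub_zero] at hcst
      linarith [hcst, hper1]
    have hf0 : ∀ θ : Fin d → ℝ, fderiv ℝ f θ = 0 := by
      intro θ
      ext x
      have hpi := LinearMap.pi_apply_eq_sum_univ ((fderiv ℝ f θ) : (Fin d → ℝ) →ₗ[ℝ] ℝ) x
      have hsingle : ∀ i : Fin d, (fun k => if i = k then (1 : ℝ) else 0) = Pi.single i 1 := by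
        intro i; funext k; simp [Pi.single_apply, eq_comm]
      simp only [ContinuousLinearMap.coe_coe] at hpi
      rw [ContinuousLinearMap.zero_apply, hpi]
      refine Finset.sum_eq_zero fun i _ => ?_
      rw [hsingle i, hder θ i, hc0 i, smul_zero]
    exact is_const_of_fderiv_eq_zero hfd hf0 (θ₀ + t) θ₀
  refine Prod.ext ?_ ?_
  · funext j; exact hconst j
  · exact hlift (θ₀ + t) θ₀ a
end

section
/- On M = 𝕋^d × ℝ^d with ω = Σ dθ_j ∧ da_j, let Ỹ_ε be a smooth time-dependent vector field that is symplectic for each ε and is a lift of a time-dependent vector field Y_ε on ℝ^d, with flow φ^ε (φ^0 = id). Then φ^ε commutes with the fiberwise torus translations τ_t for all ε and t, and consequently for every smooth tensor field T, ⟨(φ^ε)_* T⟩ = (φ^ε)_* ⟨T⟩, where ⟨·⟩ denotes the fiberwise translation average. -/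
open MeasureTheory

lemma fderiv_translation_inv {E F : Type*} [NormedAddCommGroup E] [NormedSpace ℝ E]
    [NormedAddCommGroup F] [NormedSpace ℝ F] {h : E → F} (hd : Differentiable ℝ h)
    {c : E} (hinv : ∀ q, h (q + c) = h q) (p : E) :
    fderiv ℝ h (p + c) = fderiv ℝ h p := by
  have h1 : HasFDerivAt (fun x => h (x + c)) (fderiv ℝ h (p + c)) p := by
    have := (hd (p + c)).hasFDerivAt.comp p ((hasFDerivAt_id p).add_const c)
    exact this
  rw [funext hinv] at h1
  exact h1.fderiv.symm

/-- A smooth vector field on `𝕋^d × ℝ^d` (i.e. ℤ^d-periodic in the angles) which is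
symplectic and a lift is in fact independent of the angle variables. -/
lemma key_translation_inv (d : ℕ) (Z : ((Fin d → ℝ) × (Fin d → ℝ)) → ((Fin d → ℝ) × (Fin d → ℝ)))
    (hsm : ContDiff ℝ (⊤ : ℕ∞) Z)
    (hper : ∀ (θ a : Fin d → ℝ) (n : Fin d → ℤ), Z (θ + (fun i => (n i : ℝ)), a) = Z (θ, a))
    (hclosed : ∀ (p v w : (Fin d → ℝ) × (Fin d → ℝ)),
      fderiv ℝ (fun q => stdSymp d (Z q) w) p v = fderiv ℝ (fun q => stdSymp d (Z q) v) p w)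
    (hlift : ∀ θ θ' a : Fin d → ℝ, (Z (θ, a)).2 = (Z (θ', a)).2) :
    ∀ (t θ a : Fin d → ℝ), Z (θ + t, a) = Z (θ, a) := by
  -- smoothness of the contracted forms
  have hssm : ∀ w : (Fin d → ℝ) × (Fin d → ℝ), ContDiff ℝ (⊤ : ℕ∞) (fun q => stdSymp d (Z q) w) := by
    intro w
    unfold stdSymp
    apply ContDiff.sum
    intro k _
    exact (((ContinuousLinearMap.proj k :
        (Fin d → ℝ) →L[ℝ] ℝ).contDiff.comp hsm.fst).mul contDiff_const).sub
      (contDiff_const.mul ((ContinuousLinearMap.proj k :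
        (Fin d → ℝ) →L[ℝ] ℝ).contDiff.comp hsm.snd))
  intro t θ a
  have hsnd : ∀ (p : (Fin d → ℝ) × (Fin d → ℝ)) (t : Fin d → ℝ),
      (Z (p.1 + t, p.2)).2 = (Z p).2 := fun p t => hlift (p.1 + t) p.1 p.2
  -- invariance of the `(v,0)`-contraction
  have hHinv : ∀ (v : Fin d → ℝ) (c : Fin d → ℝ) (q : (Fin d → ℝ) × (Fin d → ℝ)),
      stdSymp d (Z (q + (c, 0))) ((v, 0)) = stdSymp d (Z q) ((v, 0)) := by
    intro v c q
    unfold stdSymp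
    refine Finset.sum_congr rfl fun k _ => ?_
    have h2 : (Z (q + (c, 0))).2 = (Z q).2 := by
      have : q + ((c, 0) : (Fin d → ℝ) × (Fin d → ℝ)) = (q.1 + c, q.2) := by
        ext <;> simp
      rw [this]
      exact hsnd q c
    simp [h2]
  refine Prod.ext ?_ (hsnd (θ, a) t)
  funext j
  set w : (Fin d → ℝ) × (Fin d → ℝ) := (0, Pi.single j 1) with hw
  set F : ((Fin d → ℝ) × (Fin d → ℝ)) → ℝ := fun q => stdSymp d (Z q) w with hF
  have hFsm : ContDiff ℝ (⊤ : ℕ∞) F := hssm w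
  have hFval : ∀ q, F q = (Z q).1 j := by
    intro q
    simp [hF, hw, stdSymp, Pi.single_apply, mul_ite, Finset.sum_ite_eq']
  -- Step 1 : θ-translation invariance of θ-directional derivatives of F
  have hstep1 : ∀ (p : (Fin d → ℝ) × (Fin d → ℝ)) (c v : Fin d → ℝ),
      fderiv ℝ F (p + (c, 0)) ((v, 0)) = fderiv ℝ F p ((v, 0)) := by
    intro p c v
    rw [hF, hclosed (p + (c, 0)) ((v, 0)) w, hclosed p ((v, 0)) w]
    have := fderiv_translation_inv (h := fun q => stdSymp d (Z q) ((v, 0)))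
      ((hssm _).differentiable (by simp)) (c := ((c, 0) : (Fin d → ℝ) × (Fin d → ℝ)))
      (fun q => hHinv v c q) p
    rw [this]
  -- a line lemma: constant directional derivative along a line
  have hline : ∀ (p u : (Fin d → ℝ) × (Fin d → ℝ)) (c : ℝ),
      (∀ s : ℝ, fderiv ℝ F (p + s • u) u = c) → F (p + u) = F p + c := by
    intro p u c hc
    have hg : ∀ s : ℝ, HasDerivAt (fun s : ℝ => F (p + s • u)) c s := by
      intro s
      have hγ : HasDerivAt (fun s : ℝ => p + s • u) u s := by
        simpa using ((hasDerivAt_id s).smul_const u).const_add p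
      have hF' := ((hFsm.differentiable (by simp)) (p + s • u)).hasFDerivAt
      have := hF'.comp_hasDerivAt s hγ
      rw [hc s] at this
      exact this
    have h0 : ∀ s : ℝ, HasDerivAt (fun s : ℝ => F (p + s • u) - c * s) 0 s := by
      intro s
      have := (hg s).sub ((hasDerivAt_id s).const_mul c)
      simp at this
      exact this
    have hcst := is_const_of_deriv_eq_zero (f := fun s : ℝ => F (p + s • u) - c * s)
      (fun s => (h0 s).differentiableAt) (fun s => (h0 s).deriv) 1 0
    simp only [one_smul, zero_smul, add_zero, mul_one, mul_zero, sub_zero] at hcst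
    linarith
  -- Step 2 : derivative vanishes in integer directions
  have hzero : ∀ (p : (Fin d → ℝ) × (Fin d → ℝ)) (n : Fin d → ℤ),
      fderiv ℝ F p (((fun i => (n i : ℝ)), 0)) = 0 := by
    intro p n
    set tn : Fin d → ℝ := fun i => (n i : ℝ) with htn
    have hper' : F (p + (tn, 0)) = F p := by
      have : p + ((tn, 0) : (Fin d → ℝ) × (Fin d → ℝ)) = (p.1 + tn, p.2) := by ext <;> simp
      rw [hF, this]
      exact congrArg (fun z => stdSymp d z w) (hper p.1 p.2 n)
    have := hline p (tn, 0) (fderiv ℝ F p ((tn, 0))) ?_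
    · rw [hper'] at this; linarith
    · intro s
      have : p + s • ((tn, 0) : (Fin d → ℝ) × (Fin d → ℝ)) = p + ((s • tn, 0)) := by
        ext <;> simp
      rw [this, hstep1 p (s • tn) tn]
  -- Step 3 : derivative vanishes in all θ-directions
  have hzero' : ∀ (p : (Fin d → ℝ) × (Fin d → ℝ)) (v : Fin d → ℝ),
      fderiv ℝ F p ((v, 0)) = 0 := by
    intro p v
    have hrep : ((v, 0) : (Fin d → ℝ) × (Fin d → ℝ))
        = ∑ i, v i • (((Pi.single i 1 : Fin d → ℝ), 0) : (Fin d → ℝ) × (Fin d → ℝ)) := by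
      refine Prod.ext ?_ ?_
      · rw [Prod.fst_sum]
        funext k
        simp [Pi.single_apply, Finset.sum_ite_eq']
      · rw [Prod.snd_sum]; simp
    rw [hrep, map_sum]
    refine Finset.sum_eq_zero fun i _ => ?_
    rw [ContinuousLinearMap.map_smul]
    have hcoe : (fun k => (((Pi.single i 1 : Fin d → ℤ) k : ℤ) : ℝ)) = (Pi.single i 1 : Fin d → ℝ) := by
      funext k
      simp [Pi.single_apply, apply_ite (fun z : ℤ => (z : ℝ))]
    have := hzero p (Pi.single i 1 : Fin d → ℤ)
    rw [hcoe] at this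
    rw [this, smul_zero]
  -- Step 4 : F is invariant under all θ-translations
  have hFinv : F ((θ, a) + (t, 0)) = F (θ, a) := by
    have := hline (θ, a) ((t, 0)) 0 ?_
    · simpa using this
    · intro s
      have : ((θ, a) : (Fin d → ℝ) × (Fin d → ℝ)) + s • ((t, 0) : (Fin d → ℝ) × (Fin d → ℝ))
          = (θ, a) + ((s • t, 0)) := by ext <;> simp
      rw [this, hstep1 (θ, a) (s • t) t]
      exact hzero' (θ, a) t
  have heq : ((θ, a) : (Fin d → ℝ) × (Fin d → ℝ)) + (t, 0) = (θ + t, a) := by ext <;> simp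
  rw [heq] at hFinv
  rw [← hFval, ← hFval]
  exact hFinv




/-- On `M = 𝕋^d × ℝ^d` with `ω = Σ dθ_j ∧ da_j` (torus modelled by
ℤ^d-periodicity in the angles), let `Ỹ_ε` be a smooth time-dependent vector field which is
symplectic for each `ε` and a lift of a time-dependent vector field on `ℝ^d`, and let `φ^ε` be
its flow (`φ^0 = id`). Then `φ^ε` commutes with all fiberwise torus translations
`τ_t(θ,a) = (θ+t, a)`, and consequently for every smooth tensor field `T` (modelled by its
components, a smooth periodic map to a Banach space `F`) one has
`⟨(φ^ε)_* T⟩ = (φ^ε)_* ⟨T⟩` — equivalently, in pullback form, `⟨T ∘ φ^ε⟩ = ⟨T⟩ ∘ φ^ε`. -/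
theorem flow_of_symplectic_lift_commutes_with_translations_and_averaging
    (d : ℕ)
    (Ytil : ℝ → ((Fin d → ℝ) × (Fin d → ℝ)) → ((Fin d → ℝ) × (Fin d → ℝ)))
    (φ : ℝ → ((Fin d → ℝ) × (Fin d → ℝ)) → ((Fin d → ℝ) × (Fin d → ℝ)))
    (hYsmooth : ContDiff ℝ (⊤ : ℕ∞) (fun q : ℝ × ((Fin d → ℝ) × (Fin d → ℝ)) => Ytil q.1 q.2))
    (hYper : ∀ (ε : ℝ) (θ a : Fin d → ℝ) (n : Fin d → ℤ),
      Ytil ε (θ + (fun i => (n i : ℝ)), a) = Ytil ε (θ, a))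
    (hYclosed : ∀ (ε : ℝ) (p : (Fin d → ℝ) × (Fin d → ℝ))
        (v w : (Fin d → ℝ) × (Fin d → ℝ)),
      fderiv ℝ (fun q => stdSymp d (Ytil ε q) w) p v
        = fderiv ℝ (fun q => stdSymp d (Ytil ε q) v) p w)
    (hYlift : ∀ (ε : ℝ) (θ θ' a : Fin d → ℝ), (Ytil ε (θ, a)).2 = (Ytil ε (θ', a)).2)
    (hφ0 : φ 0 = id)
    (hφbij : ∀ ε : ℝ, Function.Bijective (φ ε))
    (hφsmooth : ContDiff ℝ (⊤ : ℕ∞) (fun q : ℝ × ((Fin d → ℝ) × (Fin d → ℝ)) => φ q.1 q.2))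
    (hφflow : ∀ (ε : ℝ) (m : (Fin d → ℝ) × (Fin d → ℝ)),
      HasDerivAt (fun e => φ e m) (Ytil ε (φ ε m)) ε) :
    (∀ (ε : ℝ) (t θ a : Fin d → ℝ),
      φ ε (θ + t, a) = ((φ ε (θ, a)).1 + t, (φ ε (θ, a)).2)) ∧
    (∀ (F : Type) (_ : NormedAddCommGroup F), ∀ (_ : NormedSpace ℝ F) (_ : CompleteSpace F),
      ∀ T : ((Fin d → ℝ) × (Fin d → ℝ)) → F,
        ContDiff ℝ (⊤ : ℕ∞) T →
        (∀ (θ a : Fin d → ℝ) (n : Fin d → ℤ), T (θ + (fun i => (n i : ℝ)), a) = T (θ, a)) →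
        ∀ (ε : ℝ) (p : (Fin d → ℝ) × (Fin d → ℝ)),
          (∫ t in Set.Icc (0 : Fin d → ℝ) 1, T (φ ε (p.1 + t, p.2)))
            = ∫ t in Set.Icc (0 : Fin d → ℝ) 1, T ((φ ε p).1 + t, (φ ε p).2)) := by
  have hZinv : ∀ (ε : ℝ) (t θ a : Fin d → ℝ), Ytil ε (θ + t, a) = Ytil ε (θ, a) := fun ε =>
    key_translation_inv d (Ytil ε) (hYsmooth.comp (contDiff_const.prodMk contDiff_id))
      (hYper ε) (hYclosed ε) (hYlift ε)
  have part1 : ∀ (ε : ℝ) (t θ a : Fin d → ℝ),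
      φ ε (θ + t, a) = ((φ ε (θ, a)).1 + t, (φ ε (θ, a)).2) := by
    intro ε₀ t θ a
    set f : ℝ → ((Fin d → ℝ) × (Fin d → ℝ)) := fun e => φ e (θ + t, a) with hf
    set g : ℝ → ((Fin d → ℝ) × (Fin d → ℝ)) := fun e => φ e (θ, a) + ((t, 0)) with hg
    have hYinv : ∀ (e : ℝ) (q : (Fin d → ℝ) × (Fin d → ℝ)), Ytil e (q + (t, 0)) = Ytil e q := by
      intro e q
      have h1 : q + ((t, 0) : (Fin d → ℝ) × (Fin d → ℝ)) = (q.1 + t, q.2) := by ext <;> simp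
      rw [h1, hZinv e t q.1 q.2]
    have hf' : ∀ e, HasDerivAt f (Ytil e (f e)) e := fun e => hφflow e (θ + t, a)
    have hg' : ∀ e, HasDerivAt g (Ytil e (g e)) e := by
      intro e
      have h1 := (hφflow e (θ, a)).add_const ((t, 0) : (Fin d → ℝ) × (Fin d → ℝ))
      rwa [← hYinv e (φ e (θ, a))] at h1
    have hfc : Continuous f := continuous_iff_continuousAt.2 fun e => (hf' e).continuousAt
    have hgc : Continuous g := continuous_iff_continuousAt.2 fun e => (hg' e).continuousAt
    set b : ℝ := |ε₀| + 1 with hb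
    have hb0 : 0 < b := by positivity
    have hK : IsCompact ((f '' Set.Icc (-b) b) ∪ (g '' Set.Icc (-b) b)) :=
      ((isCompact_Icc.image hfc).union (isCompact_Icc.image hgc))
    obtain ⟨R, hR⟩ := hK.isBounded.subset_closedBall 0
    set B := Metric.closedBall (0 : (Fin d → ℝ) × (Fin d → ℝ)) R with hB
    have hQ : IsCompact ((Set.Icc (-b) b) ×ˢ B) := isCompact_Icc.prod (isCompact_closedBall _ _)
    obtain ⟨C, hC⟩ := hQ.exists_bound_of_continuousOn
      ((hYsmooth.continuous_fderiv (by simp)).continuousOn)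
    set K : NNReal := (max C 0).toNNReal with hKdef
    have hKC : C ≤ (K : ℝ) := by
      rw [hKdef, Real.coe_toNNReal _ (le_max_right C 0)]; exact le_max_left C 0
    set s : ℝ → Set ((Fin d → ℝ) × (Fin d → ℝ)) := fun e => if e ∈ Set.Icc (-b) b then B else ∅
      with hs
    have hv : ∀ e, LipschitzOnWith K (Ytil e) (s e) := by
      intro e
      by_cases he : e ∈ Set.Icc (-b) b
      · rw [hs]; simp only [if_pos he]
        set f' : ((Fin d → ℝ) × (Fin d → ℝ)) →
            (((Fin d → ℝ) × (Fin d → ℝ)) →L[ℝ] ((Fin d → ℝ) × (Fin d → ℝ))) := fun x =>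
          (fderiv ℝ (fun q : ℝ × ((Fin d → ℝ) × (Fin d → ℝ)) => Ytil q.1 q.2) (e, x)).comp
            ((0 : ((Fin d → ℝ) × (Fin d → ℝ)) →L[ℝ] ℝ).prod
              (ContinuousLinearMap.id ℝ ((Fin d → ℝ) × (Fin d → ℝ)))) with hf'def
        apply (convex_closedBall _ _).lipschitzOnWith_of_nnnorm_hasFDerivWithin_le
          (f' := f') (fun x _ => ?_) (fun x hx => ?_)
        · -- HasFDerivWithinAt
          have hG := (hYsmooth.differentiable (by simp) (e, x)).hasFDerivAt
          have hx : HasFDerivAt (fun y : ((Fin d → ℝ) × (Fin d → ℝ)) => ((e, y) : ℝ × _))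
              ((0 : ((Fin d → ℝ) × (Fin d → ℝ)) →L[ℝ] ℝ).prod
                (ContinuousLinearMap.id ℝ ((Fin d → ℝ) × (Fin d → ℝ)))) x :=
            HasFDerivAt.prodMk (hasFDerivAt_const e x) (hasFDerivAt_id x)
          exact (hG.comp x hx).hasFDerivWithinAt
        · -- bound
          have hnorm : ‖f' x‖ ≤ (K : ℝ) := by
            refine ContinuousLinearMap.opNorm_le_bound _ (K.coe_nonneg) fun v => ?_
            have h1 : f' x v
                = fderiv ℝ (fun q : ℝ × ((Fin d → ℝ) × (Fin d → ℝ)) => Ytil q.1 q.2) (e, x)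
                  (0, v) := rfl
            rw [h1]
            refine le_trans (ContinuousLinearMap.le_opNorm _ _) ?_
            have hmem : ((e, x) : ℝ × ((Fin d → ℝ) × (Fin d → ℝ))) ∈
                (Set.Icc (-b) b) ×ˢ B := ⟨he, hx⟩
            have h2 := (hC _ hmem).trans hKC
            have h3 : ‖(((0 : ℝ), v) : ℝ × ((Fin d → ℝ) × (Fin d → ℝ)))‖ = ‖v‖ := by
              rw [Prod.norm_def]; simp [max_eq_right (norm_nonneg v)]
            rw [h3]
            exact mul_le_mul_of_nonneg_right h2 (norm_nonneg v)
          rwa [← NNReal.coe_le_coe, coe_nnnorm]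
      · rw [hs]; simp only [if_neg he]; exact lipschitzOnWith_empty K _
    have ht0 : (0 : ℝ) ∈ Set.Ioo (-b) b := ⟨by linarith, hb0⟩
    have hmemf : ∀ e ∈ Set.Ioo (-b) b, HasDerivAt f (Ytil e (f e)) e ∧ f e ∈ s e := by
      intro e he
      refine ⟨hf' e, ?_⟩
      rw [hs]; simp only [if_pos (Set.mem_Icc_of_Ioo he)]
      exact hR (Set.mem_union_left _ (Set.mem_image_of_mem f (Set.mem_Icc_of_Ioo he)))
    have hmemg : ∀ e ∈ Set.Ioo (-b) b, HasDerivAt g (Ytil e (g e)) e ∧ g e ∈ s e := by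
      intro e he
      refine ⟨hg' e, ?_⟩
      rw [hs]; simp only [if_pos (Set.mem_Icc_of_Ioo he)]
      exact hR (Set.mem_union_right _ (Set.mem_image_of_mem g (Set.mem_Icc_of_Ioo he)))
    have heq0 : f 0 = g 0 := by
      show φ 0 (θ + t, a) = φ 0 (θ, a) + (t, 0)
      rw [hφ0]
      ext <;> simp
    have hEq := ODE_solution_unique_of_mem_Ioo (fun e _ => hv e) ht0 hmemf hmemg heq0
    have hε₀ : ε₀ ∈ Set.Ioo (-b) b := by
      constructor
      · have := neg_abs_le ε₀; rw [hb]; linarith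
      · have := le_abs_self ε₀; rw [hb]; linarith
    have := hEq hε₀
    rw [hf, hg] at this
    simp only at this
    rw [this]
    ext <;> simp
  refine ⟨part1, ?_⟩
  intro F _ _ _ T hTsm hTper ε p
  have hfun : (fun t => T (φ ε (p.1 + t, p.2))) = fun t => T ((φ ε p).1 + t, (φ ε p).2) := by
    funext t
    rw [part1 ε t p.1 p.2]
  rw [hfun]
end
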